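/- If (φ̃_j)_{j∈N_0} is a dyadic partition of unity on R^n satisfying supp φ̃_0 ⊆ {|ξ| ≤ 2}, supp φ̃_j ⊆ {2^{j−1} ≤ |ξ| ≤ 2^{j+1}} for j ≥ 1, and |∂_ξ^α φ̃_j(ξ)| ≤ c_α 2^{−j|α|} for all ξ, then the restrictions φ_j := φ̃_j|_{Z^n} satisfy: for every multi-index γ there exists C > 0 with |Δ_k^γ φ_j(k)| ≤ C ⟨k⟩^{−|γ|} for all j ∈ N and all k ∈ Z^n, where ⟨k⟩ = (1+|k|²)^{1/2}. -/

import Mathlib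

open MeasureTheory Real Complex Finset Filter
open scoped BigOperators ENNReal Topology

noncomputable section

/-- The cube `[-π,π]^n` of representatives of the torus `𝕋^n = (ℝ/2πℤ)^n`. -/
def torusCube (n : ℕ) : Set (Fin n → ℝ) :=
  Set.pi Set.univ fun _ => Set.Icc (-π) π

/-- The normalized Haar measure `(2π)^{-n} dx` of the torus, realized on the cube. -/
def torusMeasure (n : ℕ) : Measure (Fin n → ℝ) :=
  (ENNReal.ofReal ((2 * π) ^ n))⁻¹ • (volume.restrict (torusCube n))

/-- `2π`-periodicity in each coordinate: functions on the torus. -/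
def Periodic2Pi {n : ℕ} {E : Type*} (f : (Fin n → ℝ) → E) : Prop :=
  ∀ (x : Fin n → ℝ) (j : Fin n), f (x + Pi.single j (2 * π)) = f x

/-- Euclidean norm on `ℝ^n`. -/
def enorm' {n : ℕ} (x : Fin n → ℝ) : ℝ := Real.sqrt (∑ i, x i ^ 2)

/-- Euclidean norm of a lattice point. -/
def znorm {n : ℕ} (k : Fin n → ℤ) : ℝ := enorm' fun i => (k i : ℝ)

/-- The Japanese bracket `⟨k⟩ = (1+|k|²)^{1/2}`. -/
def jbra {n : ℕ} (k : Fin n → ℤ) : ℝ := Real.sqrt (1 + ∑ i, ((k i : ℝ)) ^ 2)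

/-- `k · x` for `k ∈ ℤ^n`, `x ∈ ℝ^n`. -/
def zdot {n : ℕ} (k : Fin n → ℤ) (x : Fin n → ℝ) : ℝ := ∑ i, (k i : ℝ) * x i

/-- Discrete Fourier coefficient `f̂(k) = (2π)^{-n} ∫_{[-π,π]^n} e^{-ik·x} f(x) dx`. -/
def fourierCoeff' {n : ℕ} {E : Type*} [NormedAddCommGroup E] [NormedSpace ℂ E]
    (f : (Fin n → ℝ) → E) (k : Fin n → ℤ) : E :=
  ∫ x, Complex.exp (-(Complex.I * (zdot k x : ℂ))) • f x ∂(torusMeasure n)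

/-- Forward difference in the `j`-th coordinate. -/
def fdiff {n : ℕ} {E : Type*} [AddCommGroup E] (j : Fin n)
    (f : (Fin n → ℤ) → E) : (Fin n → ℤ) → E :=
  fun k => f (k + Pi.single j 1) - f k

/-- Iterated forward difference `Δ_k^γ` for a multi-index `γ`. -/
def mdiff {n : ℕ} {E : Type*} [AddCommGroup E] (γ : Fin n → ℕ)
    (f : (Fin n → ℤ) → E) : (Fin n → ℤ) → E :=
  (List.finRange n).foldr (fun j g => (fdiff j)^[γ j] g) f

/-- Partial derivative in direction `j`. -/
def pderiv1 {n : ℕ} {E : Type*} [NormedAddCommGroup E] [NormedSpace ℝ E] (j : Fin n)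
    (f : (Fin n → ℝ) → E) : (Fin n → ℝ) → E :=
  fun x => fderiv ℝ f x (Pi.single j 1)

/-- Iterated partial derivative `∂_x^β` for a multi-index `β`. -/
def mpderiv {n : ℕ} {E : Type*} [NormedAddCommGroup E] [NormedSpace ℝ E] (β : Fin n → ℕ)
    (f : (Fin n → ℝ) → E) : (Fin n → ℝ) → E :=
  (List.finRange n).foldr (fun j g => (pderiv1 j)^[β j] g) f

/-- The finite set of multi-indices `γ` with `|γ| = N`. -/
def multiIndicesEq (n N : ℕ) : Finset (Fin n → ℕ) :=
  (Fintype.piFinset fun _ : Fin n => Finset.range (N + 1)).filter fun γ => ∑ i, γ i = N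

/-- The finite set of multi-indices `γ` with `|γ| ≤ N`. -/
def multiIndicesLe (n N : ℕ) : Finset (Fin n → ℕ) :=
  (Fintype.piFinset fun _ : Fin n => Finset.range (N + 1)).filter fun γ => ∑ i, γ i ≤ N

/-- `(e^{-iη}-1)^γ = ∏_j (e^{-iη_j}-1)^{γ_j}`. -/
def expPow {n : ℕ} (η : Fin n → ℝ) (γ : Fin n → ℕ) : ℂ :=
  ∏ j, (Complex.exp (-(Complex.I * (η j : ℂ))) - 1) ^ γ j

/-- Fourier multiplier `op[ψ]` with scalar symbol `ψ : ℤ^n → ℝ`. -/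
def opMult {n : ℕ} {E : Type*} [NormedAddCommGroup E] [NormedSpace ℂ E]
    (ψ : (Fin n → ℤ) → ℝ) (f : (Fin n → ℝ) → E) : (Fin n → ℝ) → E :=
  fun x => ∑' k : Fin n → ℤ,
    (((ψ k : ℝ) : ℂ) * Complex.exp (Complex.I * (zdot k x : ℂ))) • fourierCoeff' f k

/-- Pseudodifferential operator `op[a]` with operator-valued symbol. -/
def opSymb {n : ℕ} {E : Type*} [NormedAddCommGroup E] [NormedSpace ℂ E]
    (a : (Fin n → ℝ) → (Fin n → ℤ) → (E →L[ℂ] E)) (f : (Fin n → ℝ) → E) :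
    (Fin n → ℝ) → E :=
  fun x => ∑' k : Fin n → ℤ,
    Complex.exp (Complex.I * (zdot k x : ℂ)) • (a x k) (fourierCoeff' f k)

/-- `χ_j = φ_{j-1} + φ_j + φ_{j+1}` (with `φ_{-1} = 0`). -/
def chi {n : ℕ} (φ : ℕ → (Fin n → ℤ) → ℝ) (j : ℕ) : (Fin n → ℤ) → ℝ :=
  fun k => (if j = 0 then 0 else φ (j - 1) k) + φ j k + φ (j + 1) k

/-- A dyadic decomposition of `ℤ^n`. -/
structure IsDyadic (n : ℕ) (φ : ℕ → (Fin n → ℤ) → ℝ) : Prop where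
  supp0 : ∀ k, 2 < znorm k → φ 0 k = 0
  suppj : ∀ j, 1 ≤ j → ∀ k : Fin n → ℤ,
    (znorm k < 2 ^ (j - 1) ∨ (2 : ℝ) ^ (j + 1) < znorm k) → φ j k = 0
  nonneg : ∀ j k, 0 ≤ φ j k
  le_one : ∀ j k, φ j k ≤ 1
  sum_one : ∀ k, ∑' j : ℕ, φ j k = 1
  diff_bound : ∀ γ : Fin n → ℕ, ∃ c > (0 : ℝ), ∀ j, 1 ≤ j → ∀ k,
    |mdiff γ (φ j) k| ≤ c * jbra k ^ (-(∑ i, γ i : ℝ))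

/-- The symbol estimates of the class `S^{m,ρ,r}(𝕋^n × ℤ^n, L(E))` with constant `A`
(in place of the symbol norm `‖a‖_m^{(ρ,r)}`). -/
def SymbolEst {n : ℕ} {E : Type*} [NormedAddCommGroup E] [NormedSpace ℂ E]
    (m : ℝ) (ρ : ℕ) (r : ℝ) (A : ℝ)
    (a : (Fin n → ℝ) → (Fin n → ℤ) → (E →L[ℂ] E)) : Prop :=
  (∀ k, ContDiff ℝ (⌊r⌋₊) fun x => a x k) ∧
  (∀ k, Periodic2Pi fun x => a x k) ∧
  (∀ α ∈ multiIndicesLe n ρ, ∀ β ∈ multiIndicesLe n ⌊r⌋₊,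
    ∀ (x : Fin n → ℝ) (k : Fin n → ℤ),
      ‖mdiff α (fun l => mpderiv β (fun y => a y l) x) k‖ ≤
        A * jbra k ^ (m - (∑ i, α i : ℝ))) ∧
  ((r = ⌊r⌋₊) ∨ ∀ α ∈ multiIndicesLe n ρ, ∀ β ∈ multiIndicesEq n ⌊r⌋₊,
    ∀ (x y : Fin n → ℝ) (k : Fin n → ℤ),
      ‖mdiff α (fun l => mpderiv β (fun z => a z l) x - mpderiv β (fun z => a z l) y) k‖ ≤
        A * jbra k ^ (m - (∑ i, α i : ℝ)) * enorm' (x - y) ^ (r - ⌊r⌋₊))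

/-- The toroidal Besov norm `‖f‖_{B^s_{p,q}}` (as an extended real), defined via a
dyadic decomposition `φ`. -/
def besovNorm {n : ℕ} {E : Type*} [NormedAddCommGroup E] [NormedSpace ℂ E]
    (φ : ℕ → (Fin n → ℤ) → ℝ) (s : ℝ) (p q : ℝ≥0∞) (f : (Fin n → ℝ) → E) : ℝ≥0∞ :=
  if q = ∞ then
    ⨆ j : ℕ, ENNReal.ofReal ((2 : ℝ) ^ ((j : ℝ) * s)) * eLpNorm (opMult (φ j) f) p (torusMeasure n)
  else
    (∑' j : ℕ, (ENNReal.ofReal ((2 : ℝ) ^ ((j : ℝ) * s)) *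
      eLpNorm (opMult (φ j) f) p (torusMeasure n)) ^ q.toReal) ^ (1 / q.toReal)

namespace Stmt6Aux

variable {n : ℕ}

/-- Continuous forward difference in the `j`-th coordinate. -/
def cdiff (j : Fin n) (f : (Fin n → ℝ) → ℝ) : (Fin n → ℝ) → ℝ :=
  fun x => f (x + Pi.single j 1) - f x

/-- List version of `mdiff` (continuous). -/
def cmdiffL (L : List (Fin n)) (γ : Fin n → ℕ) (f : (Fin n → ℝ) → ℝ) : (Fin n → ℝ) → ℝ :=
  L.foldr (fun j g => (cdiff j)^[γ j] g) f

/-- List version of `mpderiv`. -/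
def mpderivL (L : List (Fin n)) (γ : Fin n → ℕ) (f : (Fin n → ℝ) → ℝ) : (Fin n → ℝ) → ℝ :=
  L.foldr (fun j g => (pderiv1 j)^[γ j] g) f

/-- List version of `mdiff`. -/
def mdiffL (L : List (Fin n)) (γ : Fin n → ℕ) (f : (Fin n → ℤ) → ℝ) : (Fin n → ℤ) → ℝ :=
  L.foldr (fun j g => (fdiff j)^[γ j] g) f

lemma mdiff_eq_mdiffL (γ : Fin n → ℕ) (f : (Fin n → ℤ) → ℝ) :
    mdiff γ f = mdiffL (List.finRange n) γ f := rfl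

lemma mpderiv_eq_mpderivL (γ : Fin n → ℕ) (f : (Fin n → ℝ) → ℝ) :
    mpderiv γ f = mpderivL (List.finRange n) γ f := rfl

lemma contDiff_cdiff {j : Fin n} {f : (Fin n → ℝ) → ℝ} (hf : ContDiff ℝ (⊤ : ℕ∞) f) :
    ContDiff ℝ (⊤ : ℕ∞) (cdiff j f) :=
  (hf.comp (contDiff_id.add contDiff_const)).sub hf

lemma contDiff_cdiff_iter {j : Fin n} (m : ℕ) {f : (Fin n → ℝ) → ℝ} (hf : ContDiff ℝ (⊤ : ℕ∞) f) :
    ContDiff ℝ (⊤ : ℕ∞) ((cdiff j)^[m] f) := by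
  induction m with
  | zero => exact hf
  | succ m ih => rw [Function.iterate_succ_apply']; exact contDiff_cdiff ih

lemma contDiff_cmdiffL (L : List (Fin n)) (γ : Fin n → ℕ) {f : (Fin n → ℝ) → ℝ}
    (hf : ContDiff ℝ (⊤ : ℕ∞) f) : ContDiff ℝ (⊤ : ℕ∞) (cmdiffL L γ f) := by
  induction L with
  | nil => exact hf
  | cons j L ih => exact contDiff_cdiff_iter (γ j) ih

lemma contDiff_pderiv1 {j : Fin n} {f : (Fin n → ℝ) → ℝ} (hf : ContDiff ℝ (⊤ : ℕ∞) f) :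
    ContDiff ℝ (⊤ : ℕ∞) (pderiv1 j f) :=
  (hf.fderiv_right (by simp)).clm_apply contDiff_const

lemma contDiff_pderiv1_iter {j : Fin n} (m : ℕ) {f : (Fin n → ℝ) → ℝ} (hf : ContDiff ℝ (⊤ : ℕ∞) f) :
    ContDiff ℝ (⊤ : ℕ∞) ((pderiv1 j)^[m] f) := by
  induction m with
  | zero => exact hf
  | succ m ih => rw [Function.iterate_succ_apply']; exact contDiff_pderiv1 ih

lemma contDiff_mpderivL (L : List (Fin n)) (γ : Fin n → ℕ) {f : (Fin n → ℝ) → ℝ}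
    (hf : ContDiff ℝ (⊤ : ℕ∞) f) : ContDiff ℝ (⊤ : ℕ∞) (mpderivL L γ f) := by
  induction L with
  | nil => exact hf
  | cons j L ih => exact contDiff_pderiv1_iter (γ j) ih

lemma pderiv1_cdiff {j i : Fin n} {f : (Fin n → ℝ) → ℝ} (hf : ContDiff ℝ (⊤ : ℕ∞) f) :
    pderiv1 j (cdiff i f) = cdiff i (pderiv1 j f) := by
  funext x
  have hd : Differentiable ℝ f := hf.differentiable (by simp)
  have h1 : HasFDerivAt (fun y : Fin n → ℝ => f (y + Pi.single i 1))
      (fderiv ℝ f (x + Pi.single i 1)) x := by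
    have := (hd (x + Pi.single i 1)).hasFDerivAt.comp x
      ((hasFDerivAt_id x).add_const (Pi.single i 1))
    simp at this; exact this
  have h2 : HasFDerivAt (cdiff i f)
      (fderiv ℝ f (x + Pi.single i 1) - fderiv ℝ f x) x := h1.sub (hd x).hasFDerivAt
  simp only [pderiv1, cdiff, h2.fderiv, ContinuousLinearMap.sub_apply]

lemma pderiv1_cdiff_iter {j i : Fin n} (m : ℕ) {f : (Fin n → ℝ) → ℝ} (hf : ContDiff ℝ (⊤ : ℕ∞) f) :
    pderiv1 j ((cdiff i)^[m] f) = (cdiff i)^[m] (pderiv1 j f) := by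
  induction m with
  | zero => rfl
  | succ m ih =>
    rw [Function.iterate_succ_apply', Function.iterate_succ_apply',
      pderiv1_cdiff (contDiff_cdiff_iter m hf), ih]

lemma pderiv1_iter_cdiff {j i : Fin n} (m : ℕ) {f : (Fin n → ℝ) → ℝ} (hf : ContDiff ℝ (⊤ : ℕ∞) f) :
    (pderiv1 j)^[m] (cdiff i f) = cdiff i ((pderiv1 j)^[m] f) := by
  induction m with
  | zero => rfl
  | succ m ih =>
    rw [Function.iterate_succ_apply', Function.iterate_succ_apply', ih,
      pderiv1_cdiff (contDiff_pderiv1_iter m hf)]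

lemma cdiff_comm (i j : Fin n) (f : (Fin n → ℝ) → ℝ) :
    cdiff i (cdiff j f) = cdiff j (cdiff i f) := by
  funext x
  simp only [cdiff, add_right_comm]
  ring

lemma cdiff_iter_comm (i j : Fin n) (m : ℕ) (f : (Fin n → ℝ) → ℝ) :
    cdiff j ((cdiff i)^[m] f) = (cdiff i)^[m] (cdiff j f) := by
  induction m with
  | zero => rfl
  | succ m ih =>
    rw [Function.iterate_succ_apply', Function.iterate_succ_apply', cdiff_comm, ih]

lemma cdiff_cmdiffL (j : Fin n) (L : List (Fin n)) (γ : Fin n → ℕ) (f : (Fin n → ℝ) → ℝ) :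
    cdiff j (cmdiffL L γ f) = cmdiffL L γ (cdiff j f) := by
  induction L with
  | nil => rfl
  | cons i L ih =>
    show cdiff j ((cdiff i)^[γ i] (cmdiffL L γ f)) = (cdiff i)^[γ i] (cmdiffL L γ (cdiff j f))
    rw [cdiff_iter_comm, ih]

lemma mpderivL_cdiff (j : Fin n) (L : List (Fin n)) (γ : Fin n → ℕ)
    {f : (Fin n → ℝ) → ℝ} (hf : ContDiff ℝ (⊤ : ℕ∞) f) :
    mpderivL L γ (cdiff j f) = cdiff j (mpderivL L γ f) := by
  induction L with
  | nil => rfl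
  | cons i L ih =>
    show (pderiv1 i)^[γ i] (mpderivL L γ (cdiff j f))
      = cdiff j ((pderiv1 i)^[γ i] (mpderivL L γ f))
    rw [ih, pderiv1_iter_cdiff (γ i) (contDiff_mpderivL L γ hf)]

/-- Mean value theorem bound for a single forward difference. -/
lemma cdiff_bound {j : Fin n} {f : (Fin n → ℝ) → ℝ} (hf : ContDiff ℝ (⊤ : ℕ∞) f) {M : ℝ}
    (hM : ∀ ξ, |pderiv1 j f ξ| ≤ M) (x : Fin n → ℝ) : |cdiff j f x| ≤ M := by
  have hd : Differentiable ℝ f := hf.differentiable (by simp)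
  set v : Fin n → ℝ := Pi.single j 1 with hv
  have key : ∀ t : ℝ, HasDerivAt (fun s : ℝ => f (x + s • v)) (pderiv1 j f (x + t • v)) t := by
    intro t
    have hline : HasDerivAt (fun s : ℝ => x + s • v) v t := by
      simpa using ((hasDerivAt_id t).smul_const v).const_add x
    exact (hd (x + t • v)).hasFDerivAt.comp_hasDerivAt t hline
  have := norm_image_sub_le_of_norm_deriv_le_segment_01'
    (f := fun s : ℝ => f (x + s • v)) (f' := fun t => pderiv1 j f (x + t • v))
    (fun t _ => (key t).hasDerivWithinAt) (fun t _ => hM _)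
  simpa [cdiff, Real.norm_eq_abs] using this

/-- Main estimate: the iterated difference is bounded by a uniform bound on the
corresponding iterated partial derivative. -/
lemma boundL (L : List (Fin n)) :
    ∀ (γ : Fin n → ℕ) (f : (Fin n → ℝ) → ℝ) (M : ℝ), ContDiff ℝ (⊤ : ℕ∞) f →
      (∀ ξ, |mpderivL L γ f ξ| ≤ M) → ∀ x, |cmdiffL L γ f x| ≤ M := by
  induction L with
  | nil => intro γ f M _ hb x; exact hb x
  | cons j L IH =>
    have inner : ∀ m : ℕ, ∀ (γ : Fin n → ℕ) (f : (Fin n → ℝ) → ℝ) (M : ℝ),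
        ContDiff ℝ (⊤ : ℕ∞) f →
        (∀ ξ, |(pderiv1 j)^[m] (mpderivL L γ f) ξ| ≤ M) →
        ∀ x, |(cdiff j)^[m] (cmdiffL L γ f) x| ≤ M := by
      intro m
      induction m with
      | zero => intro γ f M hf hb x; exact IH γ f M hf hb x
      | succ m IHm =>
        intro γ f M hf hb x
        rw [Function.iterate_succ_apply, cdiff_cmdiffL]
        refine IHm γ (cdiff j f) M (contDiff_cdiff hf) ?_ x
        intro ξ
        rw [mpderivL_cdiff j L γ hf, pderiv1_iter_cdiff m (contDiff_mpderivL L γ hf)]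
        refine cdiff_bound (contDiff_pderiv1_iter m (contDiff_mpderivL L γ hf)) ?_ ξ
        intro η
        rw [← Function.iterate_succ_apply' (pderiv1 j)]
        exact hb η
    intro γ f M hf hb
    exact inner (γ j) γ f M hf hb

/-- The lattice embedding. -/
def ι (k : Fin n → ℤ) : Fin n → ℝ := fun i => (k i : ℝ)

lemma ι_add_single (k : Fin n → ℤ) (j : Fin n) :
    ι (k + Pi.single j 1) = ι k + Pi.single j 1 := by
  funext i
  rcases eq_or_ne i j with rfl | h
  · simp [ι]
  · simp [ι, Pi.single_apply, h]

lemma restrict_iter (j : Fin n) (m : ℕ) (f : (Fin n → ℝ) → ℝ) :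
    (fdiff j)^[m] (fun k => f (ι k)) = fun k => ((cdiff j)^[m] f) (ι k) := by
  induction m with
  | zero => rfl
  | succ m ih =>
    rw [Function.iterate_succ_apply', Function.iterate_succ_apply', ih]
    funext k
    show ((cdiff j)^[m] f) (ι (k + Pi.single j 1)) - ((cdiff j)^[m] f) (ι k) = _
    rw [ι_add_single]
    rfl

lemma restrict_mdiffL (L : List (Fin n)) (γ : Fin n → ℕ) (f : (Fin n → ℝ) → ℝ) :
    mdiffL L γ (fun k => f (ι k)) = fun k => cmdiffL L γ f (ι k) := by
  induction L with
  | nil => rfl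
  | cons j L ih =>
    show (fdiff j)^[γ j] (mdiffL L γ (fun k => f (ι k))) = _
    rw [ih, restrict_iter]
    rfl

/-- If `g` vanishes on the forward box determined by `γ` and the coordinates in `L`,
then the iterated difference vanishes. -/
lemma mdiffL_eq_zero : ∀ (L : List (Fin n)), L.Nodup → ∀ (γ : Fin n → ℕ)
    (g : (Fin n → ℤ) → ℝ) (k : Fin n → ℤ),
    (∀ l : Fin n → ℤ, (∀ i, k i ≤ l i ∧ l i ≤ k i + (if i ∈ L then (γ i : ℤ) else 0)) →
      g l = 0) → mdiffL L γ g k = 0 := by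
  intro L
  induction L with
  | nil =>
    intro _ γ g k h
    exact h k (fun i => by simp)
  | cons j L IH =>
    intro hnd γ g k h
    have hjL : j ∉ L := (List.nodup_cons.mp hnd).1
    have hndL : L.Nodup := (List.nodup_cons.mp hnd).2
    have step : ∀ (m : ℕ) (hfun : (Fin n → ℤ) → ℝ) (k0 : Fin n → ℤ),
        (∀ t : ℕ, t ≤ m → hfun (k0 + (t : ℤ) • Pi.single j 1) = 0) →
        (fdiff j)^[m] hfun k0 = 0 := by
      intro m
      induction m with
      | zero =>
        intro hfun k0 hz
        simpa using hz 0 le_rfl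
      | succ m IHm =>
        intro hfun k0 hz
        rw [Function.iterate_succ_apply]
        refine IHm (fdiff j hfun) k0 ?_
        intro t ht
        have e1 : k0 + (t : ℤ) • Pi.single j 1 + Pi.single j 1
            = k0 + ((t + 1 : ℕ) : ℤ) • Pi.single j 1 := by
          push_cast
          rw [add_smul, one_smul, add_assoc]
        show hfun (k0 + (t : ℤ) • Pi.single j 1 + Pi.single j 1)
            - hfun (k0 + (t : ℤ) • Pi.single j 1) = 0
        rw [e1, hz (t + 1) (by omega), hz t (by omega), sub_zero]
    show (fdiff j)^[γ j] (mdiffL L γ g) k = 0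
    refine step (γ j) _ k ?_
    intro t ht
    refine IH hndL γ g _ ?_
    intro l hl
    refine h l ?_
    intro i
    have hi := hl i
    rcases eq_or_ne i j with rfl | hij
    · have h1 : (k + (t : ℤ) • Pi.single i 1 : Fin n → ℤ) i = k i + t := by simp
      rw [h1] at hi
      constructor
      · omega
      · have : (if i ∈ L then (γ i : ℤ) else 0) = 0 := by simp [hjL]
        rw [this] at hi
        have ht' : (t : ℤ) ≤ (γ i : ℤ) := by exact_mod_cast ht
        simp only [if_pos (by simp : i ∈ i :: L)]
        omega
    · have h1 : (k + (t : ℤ) • Pi.single j 1 : Fin n → ℤ) i = k i := by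
        simp [Pi.single_apply, hij]
      rw [h1] at hi
      constructor
      · exact hi.1
      · rcases hi with ⟨_, hi2⟩
        by_cases hiL : i ∈ L
        · simpa [hiL, List.mem_cons, hij] using hi2
        · have : l i ≤ k i := by simpa [hiL] using hi2
          have : (0 : ℤ) ≤ (if i ∈ j :: L then (γ i : ℤ) else 0) := by
            split <;> simp
          omega

/-- Euclidean norm facts. -/
lemma enorm'_eq (a : Fin n → ℝ) : enorm' a = ‖(WithLp.equiv 2 (Fin n → ℝ)).symm a‖ := by
  rw [EuclideanSpace.norm_eq]
  simp [enorm', sq_abs]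

lemma enorm'_triangle (a b : Fin n → ℝ) : enorm' (a + b) ≤ enorm' a + enorm' b := by
  rw [enorm'_eq, enorm'_eq, enorm'_eq]
  exact norm_add_le _ _

lemma enorm'_nonneg (a : Fin n → ℝ) : 0 ≤ enorm' a := Real.sqrt_nonneg _

lemma jbra_pos (k : Fin n → ℤ) : 0 < jbra k := by
  refine Real.sqrt_pos.mpr ?_
  have : (0 : ℝ) ≤ ∑ i, ((k i : ℝ)) ^ 2 := by positivity
  linarith

lemma jbra_le (k : Fin n → ℤ) : jbra k ≤ 1 + enorm' (ι k) := by
  have hs : (0 : ℝ) ≤ ∑ i, ((k i : ℝ)) ^ 2 := by positivity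
  have h1 : jbra k ≤ Real.sqrt ((1 + Real.sqrt (∑ i, ((k i : ℝ)) ^ 2)) ^ 2) := by
    apply Real.sqrt_le_sqrt
    nlinarith [Real.sq_sqrt hs, Real.sqrt_nonneg (∑ i, ((k i : ℝ)) ^ 2)]
  rw [Real.sqrt_sq (by positivity)] at h1
  exact h1

lemma mdiffL_of_zero (L : List (Fin n)) {γ : Fin n → ℕ} (hγ : ∀ i, γ i = 0)
    (g : (Fin n → ℤ) → ℝ) : mdiffL L γ g = g := by
  induction L with
  | nil => rfl
  | cons j L ih =>
    show (fdiff j)^[γ j] (mdiffL L γ g) = g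
    rw [hγ j]
    simpa using ih

end Stmt6Aux

open Stmt6Aux

/-- restrictions of a dyadic partition of unity on `ℝ^n` satisfy the
discrete difference estimates. -/
theorem restriction_diff_bound (n : ℕ) (φt : ℕ → (Fin n → ℝ) → ℝ)
    (hsmooth : ∀ j, ContDiff ℝ (⊤ : ℕ∞) (φt j))
    (hrange : ∀ j ξ, φt j ξ ∈ Set.Icc (0 : ℝ) 1)
    (hsupp0 : ∀ ξ, 2 < enorm' ξ → φt 0 ξ = 0)
    (hsuppj : ∀ j, 1 ≤ j → ∀ ξ,
      (enorm' ξ < 2 ^ (j - 1) ∨ (2 : ℝ) ^ (j + 1) < enorm' ξ) → φt j ξ = 0)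
    (hderiv : ∀ α : Fin n → ℕ, ∃ c > (0 : ℝ), ∀ j ξ,
      |mpderiv α (φt j) ξ| ≤ c * (2 : ℝ) ^ (-(j : ℝ) * (∑ i, α i : ℝ))) :
    ∀ γ : Fin n → ℕ, ∃ C > (0 : ℝ), ∀ j, 1 ≤ j → ∀ k : Fin n → ℤ,
      |mdiff γ (fun l => φt j fun i => ((l i : ℝ))) k| ≤
        C * jbra k ^ (-(∑ i, γ i : ℝ)) := by
  intro γ
  obtain ⟨c, hc, hd⟩ := hderiv γ
  set N : ℕ := ∑ i, γ i with hN
  have hNr : (∑ i, (γ i : ℝ)) = (N : ℝ) := by rw [hN]; push_cast; ring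
  by_cases hN0 : N = 0
  · -- all γ i = 0
    have hγ : ∀ i, γ i = 0 := by
      intro i
      have := (Finset.sum_eq_zero_iff.mp (hN ▸ hN0 : ∑ i, γ i = 0)) i (Finset.mem_univ i)
      exact this
    refine ⟨1, one_pos, ?_⟩
    intro j hj k
    have hz : (∑ i, (γ i : ℝ)) = 0 := by simp [hγ]
    rw [hz, neg_zero, Real.rpow_zero, one_mul, mdiff_eq_mdiffL,
      mdiffL_of_zero _ hγ]
    obtain ⟨h0, h1⟩ := hrange j (fun i => ((k i : ℝ)))
    exact abs_le.mpr ⟨by linarith, h1⟩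
  · have hn : 1 ≤ n := by
      rcases Nat.eq_zero_or_pos n with rfl | h
      · exact absurd (by simp [hN]) hN0
      · exact h
    set D : ℝ := 3 + (n : ℝ) * N with hD
    have hDpos : 0 < D := by positivity
    refine ⟨c * D ^ N, by positivity, ?_⟩
    intro j hj k
    have hBpos : 0 < jbra k := jbra_pos k
    rw [mdiff_eq_mdiffL]
    by_cases h0 : mdiffL (List.finRange n) γ (fun l => φt j fun i => ((l i : ℝ))) k = 0
    · rw [h0, abs_zero]
      have : 0 < jbra k ^ (-(∑ i, (γ i : ℝ))) := Real.rpow_pos_of_pos hBpos _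
      positivity
    · -- find a lattice point in the box where φt j is nonzero
      have hbox : ∃ l : Fin n → ℤ, (∀ i, k i ≤ l i ∧ l i ≤ k i + (γ i : ℤ)) ∧
          φt j (ι l) ≠ 0 := by
        by_contra hcon
        push_neg at hcon
        apply h0
        apply mdiffL_eq_zero _ (List.nodup_finRange n)
        intro l hl
        refine hcon l ?_
        intro i
        simpa [List.mem_finRange] using hl i
      obtain ⟨l, hlbox, hlne⟩ := hbox
      have hsup : enorm' (ι l) ≤ 2 ^ (j + 1) := by
        by_contra hgt
        push_neg at hgt
        exact hlne (hsuppj j hj (ι l) (Or.inr hgt))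
      have hγN : ∀ i, (γ i : ℤ) ≤ (N : ℤ) := fun i => by
        exact_mod_cast Finset.single_le_sum (f := γ) (fun _ _ => Nat.zero_le _)
          (Finset.mem_univ i)
      have hdiffb : enorm' (fun i => ((k i : ℝ)) - ((l i : ℝ))) ≤ (n : ℝ) * N := by
        have hcomp : ∀ i ∈ Finset.univ, (((k i : ℝ)) - ((l i : ℝ))) ^ 2 ≤ ((N : ℝ)) ^ 2 := by
          intro i _
          obtain ⟨ha, hb⟩ := hlbox i
          have hb' : l i ≤ k i + (N : ℤ) := le_trans hb (by linarith [hγN i])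
          have ha' : (k i : ℝ) ≤ (l i : ℝ) := by exact_mod_cast ha
          have hb'' : (l i : ℝ) ≤ (k i : ℝ) + (N : ℝ) := by exact_mod_cast hb'
          nlinarith [Nat.cast_nonneg (α := ℝ) N]
        have hsum : (∑ i, (((k i : ℝ)) - ((l i : ℝ))) ^ 2) ≤ (n : ℝ) * (N : ℝ) ^ 2 := by
          calc (∑ i, (((k i : ℝ)) - ((l i : ℝ))) ^ 2) ≤ ∑ _i : Fin n, ((N : ℝ)) ^ 2 :=
                Finset.sum_le_sum hcomp
            _ = (n : ℝ) * (N : ℝ) ^ 2 := by simp [mul_comm]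
        have h1 : enorm' (fun i => ((k i : ℝ)) - ((l i : ℝ))) ≤
            Real.sqrt ((n : ℝ) * (N : ℝ) ^ 2) := Real.sqrt_le_sqrt hsum
        have h2 : Real.sqrt ((n : ℝ) * (N : ℝ) ^ 2) ≤ (n : ℝ) * N := by
          have hnn : (1 : ℝ) ≤ (n : ℝ) := by exact_mod_cast hn
          have : ((n : ℝ) * (N : ℝ) ^ 2) ≤ ((n : ℝ) * N) ^ 2 := by nlinarith
          calc Real.sqrt ((n : ℝ) * (N : ℝ) ^ 2) ≤ Real.sqrt (((n : ℝ) * N) ^ 2) :=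
                Real.sqrt_le_sqrt this
            _ = (n : ℝ) * N := Real.sqrt_sq (by positivity)
        linarith
      have hjb : jbra k ≤ D * 2 ^ j := by
        have t1 : jbra k ≤ 1 + enorm' (ι k) := jbra_le k
        have e : ι l + (fun i => ((k i : ℝ)) - ((l i : ℝ))) = ι k := by
          funext i
          show (l i : ℝ) + (((k i : ℝ)) - ((l i : ℝ))) = (k i : ℝ)
          ring
        have t2 : enorm' (ι k) ≤ enorm' (ι l) + enorm' (fun i => ((k i : ℝ)) - ((l i : ℝ))) := by
          have := enorm'_triangle (ι l) (fun i => ((k i : ℝ)) - ((l i : ℝ)))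
          rwa [e] at this
        have t3 : (1 : ℝ) ≤ 2 ^ j := one_le_pow₀ one_le_two
        have t4 : (2 : ℝ) ^ (j + 1) = 2 * 2 ^ j := by ring
        have hnN : (0 : ℝ) ≤ (n : ℝ) * N := by positivity
        have : jbra k ≤ 1 + (2 ^ (j + 1) + (n : ℝ) * N) := by linarith
        rw [hD]
        nlinarith
      -- derivative bound
      have hder2 : |mdiffL (List.finRange n) γ (fun l => φt j fun i => ((l i : ℝ))) k| ≤
          c * (2 : ℝ) ^ (-(j : ℝ) * (∑ i, (γ i : ℝ))) := by
        have : (fun l => φt j fun i => ((l i : ℝ))) = fun l => φt j (ι l) := rfl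
        rw [this, restrict_mdiffL]
        exact boundL (List.finRange n) γ (φt j) _ (hsmooth j)
          (fun ξ => hd j ξ) (ι k)
      -- arithmetic
      have h2pow : (0 : ℝ) < 2 ^ (j * N) := by positivity
      have hBpow : (0 : ℝ) < jbra k ^ ((N : ℝ)) := Real.rpow_pos_of_pos hBpos _
      have h1 : jbra k ^ ((N : ℝ)) ≤ D ^ N * 2 ^ (j * N) := by
        calc jbra k ^ ((N : ℝ)) ≤ (D * 2 ^ j) ^ ((N : ℝ)) :=
              Real.rpow_le_rpow hBpos.le hjb (by positivity)
          _ = (D * 2 ^ j) ^ N := by rw [Real.rpow_natCast]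
          _ = D ^ N * (2 ^ j) ^ N := mul_pow _ _ _
          _ = D ^ N * 2 ^ (j * N) := by rw [← pow_mul]
      have e2 : (2 : ℝ) ^ (-(j : ℝ) * (∑ i, (γ i : ℝ))) = ((2 : ℝ) ^ (j * N))⁻¹ := by
        rw [hNr, ← Real.rpow_natCast 2 (j * N), ← Real.rpow_neg (by norm_num)]
        congr 1
        push_cast
        ring
      have e3 : jbra k ^ (-(∑ i, (γ i : ℝ))) = (jbra k ^ ((N : ℝ)))⁻¹ := by
        rw [hNr, ← Real.rpow_neg hBpos.le]
      have goal' : c / 2 ^ (j * N) ≤ (c * D ^ N) / jbra k ^ ((N : ℝ)) := by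
        rw [div_le_div_iff₀ h2pow hBpow]
        calc c * jbra k ^ ((N : ℝ)) ≤ c * (D ^ N * 2 ^ (j * N)) :=
              mul_le_mul_of_nonneg_left h1 hc.le
          _ = c * D ^ N * 2 ^ (j * N) := by ring
      calc |mdiffL (List.finRange n) γ (fun l => φt j fun i => ((l i : ℝ))) k| ≤
            c * (2 : ℝ) ^ (-(j : ℝ) * (∑ i, (γ i : ℝ))) := hder2
        _ = c / 2 ^ (j * N) := by rw [e2, div_eq_mul_inv]
        _ ≤ (c * D ^ N) / jbra k ^ ((N : ℝ)) := goal'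
        _ = c * D ^ N * jbra k ^ (-(∑ i, (γ i : ℝ))) := by rw [e3, div_eq_mul_inv]
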